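/- For every prime power q and positive integer n, the sum over all matrices X in GL_n(F_q) of ψ(tr X) equals (-1)^n · q^{n(n-1)/2}, where ψ is any non-trivial additive character of F_q. -/

import Mathlib

/-!
Write `S(ι)` for `∑_{X ∈ GL_ι(F)} ψ(tr X)`. For a block decomposition `ι ⊕ κ`, right
multiplication by the shear `[[1, 0], [W, 1]]` permutes `GL_{ι ⊕ κ}(F)` and shifts `tr X` by
`tr (X₁₂ W)`. Averaging over all `W`, the character sum `∑_W ψ(tr (X₁₂ W))` vanishes unless
`X₁₂ = 0`, so only block lower triangular `X` survive, and these are parametrised by their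
diagonal blocks in `GL_ι × GL_κ` and a free block `X₂₁`. Hence
`S(ι ⊕ κ) = q^{|ι||κ|} S(ι) S(κ)`, and `S(pt) = ∑_{t ≠ 0} ψ(t) = -1` starts the induction on `n`.
-/

open Finset

theorem Fintype.sum_units_eq_sum_ite {M β : Type*} [Monoid M] [Fintype M] [Fintype Mˣ]
    [DecidablePred (IsUnit : M → Prop)] [AddCommMonoid β] (f : M → β) :
    ∑ u : Mˣ, f u = ∑ a, if IsUnit a then f a else 0 := by
  rw [← Finset.sum_filter]
  exact Finset.sum_nbij' (↑) (fun a => if h : IsUnit a then h.unit else 1) (by simp)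
    (by simp) (by simp) (fun a ha => by simp_all) (by simp)

namespace AddChar

variable {F V R : Type*} [Field F] [AddCommGroup V] [Module F V] [Fintype V]
  [CommRing R] [IsDomain R]

theorem sum_apply_linearMap_eq_zero {ψ : AddChar F R} (hψ : ψ ≠ 1) {L : V →ₗ[F] F}
    (hL : L ≠ 0) : ∑ v, ψ (L v) = 0 := by
  obtain ⟨v, hv⟩ : ∃ v, L v ≠ 0 := by simpa [LinearMap.ext_iff] using hL
  obtain ⟨a, ha⟩ := ne_one_iff.mp hψ
  refine sum_eq_zero_of_ne_one (ψ := ψ.compAddMonoidHom L.toAddMonoidHom)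
    (ne_one_iff.mpr ⟨(a / L v) • v, ?_⟩)
  simpa [hv] using ha

end AddChar

namespace Matrix

theorem trace_fromBlocks {m n α : Type*} [Fintype m] [Fintype n] [AddCommMonoid α]
    (A : Matrix m m α) (B : Matrix m n α) (C : Matrix n m α) (D : Matrix n n α) :
    trace (fromBlocks A B C D) = trace A + trace D := by
  simp [trace, Fintype.sum_sum_type]

theorem trace_reindex {m n α : Type*} [Fintype m] [Fintype n] [AddCommMonoid α]
    (e : m ≃ n) (A : Matrix m m α) : trace (reindex e e A) = trace A := by
  simp [trace, e.symm.sum_comp (fun i => A i i)]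

theorem card_eq_card_pow {m n α : Type*} [Fintype m] [Fintype n] [DecidableEq m]
    [DecidableEq n] [Fintype α] :
    Fintype.card (Matrix m n α) = Fintype.card α ^ (Fintype.card n * Fintype.card m) := by
  rw [Fintype.card_congr of.symm, Fintype.card_fun, Fintype.card_fun, ← pow_mul]

def blocksEquiv (l m n o α : Type*) :
    Matrix (l ⊕ m) (n ⊕ o) α ≃ Matrix l n α × Matrix l o α × Matrix m n α × Matrix m o α where
  toFun M := (M.toBlocks₁₁, M.toBlocks₁₂, M.toBlocks₂₁, M.toBlocks₂₂)
  invFun B := fromBlocks B.1 B.2.1 B.2.2.1 B.2.2.2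
  left_inv := fromBlocks_toBlocks
  right_inv B := by simp

section Shear

variable {ι κ R : Type*} [Fintype ι] [Fintype κ] [DecidableEq ι] [DecidableEq κ] [Ring R]

def lowerShear (W : Matrix κ ι R) : (Matrix (ι ⊕ κ) (ι ⊕ κ) R)ˣ where
  val := fromBlocks 1 0 W 1
  inv := fromBlocks 1 0 (-W) 1
  val_inv := by simp [fromBlocks_multiply]
  inv_val := by simp [fromBlocks_multiply]

theorem trace_mul_lowerShear (M : Matrix (ι ⊕ κ) (ι ⊕ κ) R) (W : Matrix κ ι R) :
    trace (M * (lowerShear W).val) = trace M + trace (M.toBlocks₁₂ * W) := by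
  conv_lhs => rw [← fromBlocks_toBlocks M]
  conv_rhs => rw [← fromBlocks_toBlocks M]
  simp only [lowerShear, fromBlocks_multiply, trace_fromBlocks, toBlocks_fromBlocks₁₂, trace_add,
    Matrix.mul_one, Matrix.mul_zero, zero_add]
  abel

end Shear

end Matrix

section TraceCharSum

open Matrix

variable {F R : Type*} [Field F] [Fintype F] [DecidableEq F] [CommRing R] (ψ : AddChar F R)
variable {ι κ : Type*} [Fintype ι] [Fintype κ] [DecidableEq ι] [DecidableEq κ]

theorem AddChar.sum_apply_trace_mul [IsDomain R] (hψ : ψ ≠ 1) (B : Matrix ι κ F) :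
    ∑ W : Matrix κ ι F, ψ (trace (B * W))
      = if B = 0 then (Fintype.card (Matrix κ ι F) : R) else 0 := by
  split_ifs with hB
  · simp [hB]
  refine sum_apply_linearMap_eq_zero hψ (L := traceLinearMap ι F F ∘ₗ mulLeftLinearMap ι F B) ?_
  contrapose! hB
  exact ext_iff_trace_mul_right.mpr fun W => by simpa using LinearMap.congr_fun hB W

variable (ι) in
def traceCharSum : R := ∑ X : (Matrix ι ι F)ˣ, ψ (trace X.val)

theorem traceCharSum_congr (e : ι ≃ κ) : traceCharSum ψ ι = traceCharSum ψ κ :=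
  Fintype.sum_equiv (Units.mapEquiv (reindexAlgEquiv F F e).toMulEquiv) _ _
    fun X => congrArg ψ (trace_reindex e X.val).symm

theorem traceCharSum_of_isEmpty [IsEmpty ι] : traceCharSum ψ ι = 1 := by
  simp [traceCharSum]

theorem traceCharSum_of_unique [Unique ι] [IsDomain R] (hψ : ψ ≠ 1) : traceCharSum ψ ι = -1 := by
  classical
  calc traceCharSum ψ ι = ∑ a : F, if a ≠ 0 then ψ a else 0 := by
        rw [traceCharSum, Fintype.sum_units_eq_sum_ite (fun A => ψ (trace A)),
          ← uniqueEquiv.symm.sum_comp]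
        simp [isUnit_iff_isUnit_det, det_unique, trace]
    _ = ∑ a, ψ a - ψ 0 := by rw [← Finset.sum_filter, Finset.filter_ne', sum_erase_eq_sub (by simp)]
    _ = -1 := by simp [AddChar.sum_eq_zero_of_ne_one hψ]

theorem traceCharSum_sum_eq_sum_toBlocks₁₂_eq_zero [IsDomain R] [CharZero R] (hψ : ψ ≠ 1) :
    traceCharSum ψ (ι ⊕ κ) = ∑ X : (Matrix (ι ⊕ κ) (ι ⊕ κ) F)ˣ,
      if X.val.toBlocks₁₂ = 0 then ψ (trace X.val) else 0 := by
  set N : R := (Fintype.card (Matrix κ ι F) : R)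
  have hN : N ≠ 0 := Nat.cast_ne_zero.mpr Fintype.card_ne_zero
  refine mul_left_cancel₀ hN ?_
  calc N * traceCharSum ψ (ι ⊕ κ)
      = ∑ W : Matrix κ ι F, ∑ X : (Matrix (ι ⊕ κ) (ι ⊕ κ) F)ˣ,
          ψ (trace (X * lowerShear W).val) := by
        rw [show N * traceCharSum ψ (ι ⊕ κ) = ∑ _W : Matrix κ ι F, traceCharSum ψ (ι ⊕ κ) by
          simp [N]]
        exact Finset.sum_congr rfl fun W _ =>
          (Fintype.sum_equiv (Equiv.mulRight (lowerShear W)) _ _ fun _ => rfl).symm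
    _ = ∑ X : (Matrix (ι ⊕ κ) (ι ⊕ κ) F)ˣ, ψ (trace X.val) *
          ∑ W : Matrix κ ι F, ψ (trace (X.val.toBlocks₁₂ * W)) := by
        rw [Finset.sum_comm]
        simp only [Units.val_mul, trace_mul_lowerShear, AddChar.map_add_eq_mul, Finset.mul_sum]
    _ = _ := by
        simp only [AddChar.sum_apply_trace_mul ψ hψ, Finset.mul_sum, mul_ite, mul_zero]
        exact Finset.sum_congr rfl fun X _ => by split_ifs <;> ring

theorem sum_units_ite_toBlocks₁₂_eq_zero :
    ∑ X : (Matrix (ι ⊕ κ) (ι ⊕ κ) F)ˣ, (if X.val.toBlocks₁₂ = 0 then ψ (trace X.val) else 0)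
      = Fintype.card (Matrix κ ι F) * traceCharSum ψ ι * traceCharSum ψ κ := by
  classical
  rw [traceCharSum, traceCharSum,
    Fintype.sum_units_eq_sum_ite (fun A => if A.toBlocks₁₂ = 0 then ψ (trace A) else 0),
    Fintype.sum_units_eq_sum_ite (fun A => ψ (trace A)),
    Fintype.sum_units_eq_sum_ite (fun A => ψ (trace A)),
    ← (blocksEquiv ι κ ι κ F).symm.sum_comp]
  simp only [blocksEquiv, Equiv.coe_fn_symm_mk, Fintype.sum_prod_type]
  calc _ = ∑ A : Matrix ι ι F, ∑ _C : Matrix κ ι F, ∑ D : Matrix κ κ F,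
        (if IsUnit A then ψ (trace A) else 0) * (if IsUnit D then ψ (trace D) else 0) := by
        refine Finset.sum_congr rfl fun A _ => ?_
        rw [Fintype.sum_eq_single 0 fun B hB => by simp [hB]]
        simp only [isUnit_fromBlocks_zero₁₂, toBlocks_fromBlocks₁₂, trace_fromBlocks,
          AddChar.map_add_eq_mul, if_true, ite_zero_mul_ite_zero]
    _ = _ := by
        simp only [Finset.sum_const, Finset.card_univ, nsmul_eq_mul, ← Finset.mul_sum,
          ← Finset.sum_mul]
        ring

theorem traceCharSum_sum [IsDomain R] [CharZero R] (hψ : ψ ≠ 1) :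
    traceCharSum ψ (ι ⊕ κ) = Fintype.card F ^ (Fintype.card ι * Fintype.card κ) *
      traceCharSum ψ ι * traceCharSum ψ κ := by
  rw [traceCharSum_sum_eq_sum_toBlocks₁₂_eq_zero ψ hψ, sum_units_ite_toBlocks₁₂_eq_zero,
    card_eq_card_pow]
  push_cast
  ring

theorem traceCharSum_fin [IsDomain R] [CharZero R] (hψ : ψ ≠ 1) (n : ℕ) :
    traceCharSum ψ (Fin n) = (-1) ^ n * Fintype.card F ^ n.choose 2 := by
  induction n with
  | zero => simp [traceCharSum_of_isEmpty]
  | succ n ih =>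
    rw [← traceCharSum_congr ψ finSumFinEquiv, traceCharSum_sum ψ hψ, ih,
      traceCharSum_of_unique ψ hψ, Nat.choose_succ_succ', Nat.choose_one_right]
    simp only [Fintype.card_fin]
    ring

end TraceCharSum

theorem sum_trace_character_GL_general
    (F : Type) [Field F] [Fintype F] [DecidableEq F] (n : ℕ)
    (ψ : AddChar F ℂ) (hψ : ψ ≠ 1) :
    ∑ X : (Matrix (Fin n) (Fin n) F)ˣ,
        ψ (Matrix.trace (X : Matrix (Fin n) (Fin n) F))
      = (-1) ^ n * (Fintype.card F : ℂ) ^ (n * (n - 1) / 2) := by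
  rw [← Nat.choose_two_right]
  exact traceCharSum_fin ψ hψ n

/-- For a finite field `F` with `q` elements, `n ≥ 1`, and a non-trivial
additive character `ψ : F → ℂˣ`, the sum of `ψ(tr X)` over all invertible `n×n` matrices
`X` over `F` equals `(-1)ⁿ · q^{n(n-1)/2}`. -/
theorem sum_trace_character_GL
    (F : Type) [Field F] [Fintype F] [DecidableEq F] (n : ℕ) (hn : 0 < n)
    (ψ : AddChar F ℂ) (hψ : ψ ≠ 1) :
    ∑ X : (Matrix (Fin n) (Fin n) F)ˣ,
        ψ (Matrix.trace (X : Matrix (Fin n) (Fin n) F))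
      = (-1) ^ n * (Fintype.card F : ℂ) ^ (n * (n - 1) / 2) :=
  sum_trace_character_GL_general F n ψ hψ
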